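/- Let $x_1 < \dots < x_n$ with $x_1 \geq 0$, probabilities $q_k \in (0,1)$ summing to 1, $\lambda > 0$, and let $x^*$ be the unique solution in $(x_n - \lambda, x_n)$ of $x^* = \lambda \sum_k \frac{q_k x_k}{\lambda + x^* - x_k}$. Define $p_k = \frac{\lambda q_k}{\lambda + x^* - x_k}$ for each $k$. Then $p_k > 0$ for all $k$, $\sum_{k=1}^n p_k = 1$, and $\sum_{k=1}^n p_k x_k = x^*$. -/

import Mathlib

/-!
Clearing denominators gives `p k * (lam + xs - x k) = lam * q k`, and the fixed-point equation
says exactly that `∑ p k * x k = xs`. Summing the first identity therefore yields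
`(lam + xs) * (∑ p k - 1) = 0`, and `lam + xs > x (n - 1) ≥ x 0 ≥ 0`.
-/

open Finset

section SteadyState

variable {ι : Type*} [Fintype ι] {x q p : ι → ℝ} {lam xs : ℝ}

lemma sum_mul_eq_mul_sum_div (hp : ∀ k, p k = lam * q k / (lam + xs - x k)) :
    ∑ k, p k * x k = lam * ∑ k, q k * x k / (lam + xs - x k) := by
  rw [mul_sum]
  refine sum_congr rfl fun k _ => ?_
  rw [hp k]
  ring

lemma sum_mul_sub_eq_mul_sum (hd : ∀ k, lam + xs - x k ≠ 0)
    (hp : ∀ k, p k = lam * q k / (lam + xs - x k)) :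
    ∑ k, p k * (lam + xs - x k) = lam * ∑ k, q k := by
  rw [mul_sum]
  exact sum_congr rfl fun k _ => by rw [hp k, div_mul_cancel₀ _ (hd k)]

lemma sum_eq_one_of_fixedPoint (hd : ∀ k, lam + xs - x k ≠ 0) (hne : lam + xs ≠ 0)
    (hqsum : ∑ k, q k = 1) (heq : xs = lam * ∑ k, q k * x k / (lam + xs - x k))
    (hp : ∀ k, p k = lam * q k / (lam + xs - x k)) :
    ∑ k, p k = 1 := by
  have hmean : ∑ k, p k * x k = xs := (sum_mul_eq_mul_sum_div hp).trans heq.symm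
  have hkey := sum_mul_sub_eq_mul_sum hd hp
  simp only [mul_sub, sum_sub_distrib, ← sum_mul, hmean, hqsum] at hkey
  refine mul_right_cancel₀ hne ?_
  linarith

end SteadyState

lemma Monotone.apply_le_apply_pred {n : ℕ} {x : Fin n → ℝ} (hx : Monotone x) (k : Fin n)
    (h : n - 1 < n) : x k ≤ x ⟨n - 1, h⟩ :=
  hx (Fin.le_def.mpr (by simp only; omega))

/-- The steady-state distribution `p` is a probability distribution with mean `x*`. -/
theorem stmt_7 (n : ℕ) (hn : 2 ≤ n) (x q : Fin n → ℝ)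
    (hx : StrictMono x) (hx0 : 0 ≤ x ⟨0, by omega⟩)
    (hq : ∀ k, q k ∈ Set.Ioo (0 : ℝ) 1) (hqsum : ∑ k, q k = 1)
    (lam : ℝ) (hlam : 0 < lam) (xs : ℝ)
    (hmem : xs ∈ Set.Ioo (x ⟨n - 1, by omega⟩ - lam) (x ⟨n - 1, by omega⟩))
    (heq : xs = lam * ∑ k, q k * x k / (lam + xs - x k))
    (p : Fin n → ℝ) (hp : ∀ k, p k = lam * q k / (lam + xs - x k)) :
    (∀ k, 0 < p k) ∧ ∑ k, p k = 1 ∧ ∑ k, p k * x k = xs := by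
  have hlast := hx.monotone.apply_le_apply_pred (h := by omega)
  have hd : ∀ k, 0 < lam + xs - x k := fun k => by linarith [hlast k, hmem.1]
  have hpos : 0 < lam + xs := by linarith [hlast ⟨0, by omega⟩, hmem.1]
  refine ⟨fun k => ?_, sum_eq_one_of_fixedPoint (fun k => (hd k).ne') hpos.ne' hqsum heq hp,
    (sum_mul_eq_mul_sum_div hp).trans heq.symm⟩
  rw [hp k]
  exact div_pos (mul_pos hlam (hq k).1) (hd k)
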